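/- arXiv:1401.4380 — 11 statements merged into one kernel-verified Lean document; each statement's English description precedes it below -/
import Mathlib

section
/- Let u, v : ℝ² → ℝ be C² functions with u nowhere vanishing, and let f, g : ℝ → ℝ be C² functions with f′(x) ≠ 0 and g′(y) ≠ 0 for all x, y ∈ ℝ. Suppose v(f(x), g(y))·f′(x)·g′(y) = u(x, y) for all (x, y) ∈ ℝ². Then for every (x, y) ∈ ℝ², (v·v_XY − v_X·v_Y)/v³ evaluated at (f(x), g(y)) equals (u·u_xy − u_x·u_y)/u³ evaluated at (x, y). In particular, the differential function I₁,₁ = (u·u_xy − u_x·u_y)/u³ is invariant under the pseudo-group X = f(x), Y = g(y), U = u/(f′(x)·g′(y)), so that the equation (u·u_xy − u_x·u_y)/u³ = 1 is invariant under this pseudo-group. -/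
/-!
Write `W u = u·u_xy − u_x·u_y` (`mixedWronskian`), so that `I₁,₁ = W u / u³` and
`W u = u² (log u)_xy`. Multiplying by a separable factor `φ(x) ψ(y)` adds a term to `log u`
that `∂²/∂x∂y` kills, so `W (V·φ·ψ) = (φψ)² W V`; the substitution `(x, y) ↦ (f x, g y)`
gives `W (v ∘ (f, g)) = f′g′ · (W v) ∘ (f, g)` by the chain rule. With `u = v(f, g)·f′·g′`
both the numerator and `u³` pick up the factor `(f′g′)³`.
-/

open Function

noncomputable def mixedWronskian (u : ℝ → ℝ → ℝ) (x y : ℝ) : ℝ :=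
  u x y * deriv (fun X => deriv (fun Y => u X Y) y) x
    - deriv (fun X => u X y) x * deriv (fun Y => u x Y) y

section PartialDerivatives

variable {v : ℝ → ℝ → ℝ}

lemma differentiableAt_left_of_uncurry (hv : Differentiable ℝ (uncurry v)) (a b : ℝ) :
    DifferentiableAt ℝ (fun X => v X b) a :=
  (hv (a, b)).comp (f := fun X => (X, b)) a (differentiableAt_id.prodMk (differentiableAt_const b))

lemma differentiableAt_right_of_uncurry (hv : Differentiable ℝ (uncurry v)) (a b : ℝ) :
    DifferentiableAt ℝ (fun Y => v a Y) b :=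
  (hv (a, b)).comp (f := fun Y => (a, Y)) b ((differentiableAt_const a).prodMk differentiableAt_id)

lemma contDiff_uncurry_deriv_right {n : WithTop ℕ∞} (hv : ContDiff ℝ (n + 1) (uncurry v)) :
    ContDiff ℝ n (uncurry fun X Y => deriv (fun Y => v X Y) Y) := by
  have hd : Differentiable ℝ (uncurry v) := hv.differentiable (by simp)
  have h : (uncurry fun X Y => deriv (fun Y => v X Y) Y)
      = fun p => fderiv ℝ (uncurry v) p (0, 1) := by
    funext ⟨X, Y⟩
    exact ((hd (X, Y)).hasFDerivAt.comp_hasDerivAt Y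
      ((hasDerivAt_const Y X).prodMk (hasDerivAt_id Y))).deriv
  rw [h]
  exact (hv.fderiv_right le_rfl).clm_apply contDiff_const

lemma differentiableAt_left_deriv_right (hv : ContDiff ℝ 2 (uncurry v)) (a b : ℝ) :
    DifferentiableAt ℝ (fun X => deriv (fun Y => v X Y) b) a :=
  differentiableAt_left_of_uncurry
    ((contDiff_uncurry_deriv_right (n := 1) hv).differentiable one_ne_zero) a b

end PartialDerivatives

lemma mixedWronskian_mul_separable {V : ℝ → ℝ → ℝ} {φ ψ : ℝ → ℝ} {x y : ℝ}
    (hV : ContDiff ℝ 2 (uncurry V)) (hφ : DifferentiableAt ℝ φ x)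
    (hψ : DifferentiableAt ℝ ψ y) :
    mixedWronskian (fun x y => V x y * φ x * ψ y) x y
      = (φ x * ψ y) ^ 2 * mixedWronskian V x y := by
  have hV1 : Differentiable ℝ (uncurry V) := hV.differentiable (by norm_num)
  have hVx := (differentiableAt_left_of_uncurry hV1 x y).hasDerivAt
  have hVy := fun X => (differentiableAt_right_of_uncurry hV1 X y).hasDerivAt
  have hVxy := (differentiableAt_left_deriv_right hV x y).hasDerivAt
  have hux : deriv (fun X => V X y * φ X * ψ y) x
      = (deriv (fun X => V X y) x * φ x + V x y * deriv φ x) * ψ y :=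
    ((hVx.mul hφ.hasDerivAt).mul_const _).deriv
  have huy : deriv (fun Y => V x Y * φ x * ψ Y) y
      = deriv (fun Y => V x Y) y * φ x * ψ y + V x y * φ x * deriv ψ y :=
    (((hVy x).mul_const _).mul hψ.hasDerivAt).deriv
  have huy_fun : (fun X => deriv (fun Y => V X Y * φ X * ψ Y) y)
      = fun X => deriv (fun Y => V X Y) y * φ X * ψ y + V X y * φ X * deriv ψ y :=
    funext fun X => (((hVy X).mul_const _).mul hψ.hasDerivAt).deriv
  have huxy : deriv (fun X => deriv (fun Y => V X Y * φ X * ψ Y) y) x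
      = (deriv (fun X => deriv (fun Y => V X Y) y) x * φ x
          + deriv (fun Y => V x Y) y * deriv φ x) * ψ y
        + (deriv (fun X => V X y) x * φ x + V x y * deriv φ x) * deriv ψ y := by
    rw [huy_fun]
    exact (((hVxy.mul hφ.hasDerivAt).mul_const _).add
      ((hVx.mul hφ.hasDerivAt).mul_const _)).deriv
  simp only [mixedWronskian, hux, huy, huxy]
  ring

lemma mixedWronskian_comp_prodMap {v : ℝ → ℝ → ℝ} {f g : ℝ → ℝ} {x y : ℝ}
    (hv : ContDiff ℝ 2 (uncurry v)) (hf : DifferentiableAt ℝ f x)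
    (hg : DifferentiableAt ℝ g y) :
    mixedWronskian (fun x y => v (f x) (g y)) x y
      = deriv f x * deriv g y * mixedWronskian v (f x) (g y) := by
  have hv1 : Differentiable ℝ (uncurry v) := hv.differentiable (by norm_num)
  have hvx := (differentiableAt_left_of_uncurry hv1 (f x) (g y)).hasDerivAt
  have hvy := fun X => (differentiableAt_right_of_uncurry hv1 X (g y)).hasDerivAt
  have hvxy := (differentiableAt_left_deriv_right hv (f x) (g y)).hasDerivAt
  have hux : deriv (fun X => v (f X) (g y)) x = deriv (fun X => v X (g y)) (f x) * deriv f x :=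
    (hvx.comp x hf.hasDerivAt).deriv
  have huy_fun : (fun X => deriv (fun Y => v (f X) (g Y)) y)
      = fun X => deriv (fun Y => v (f X) Y) (g y) * deriv g y :=
    funext fun X => ((hvy (f X)).comp y hg.hasDerivAt).deriv
  have huxy : deriv (fun X => deriv (fun Y => v (f X) (g Y)) y) x
      = deriv (fun X => deriv (fun Y => v X Y) (g y)) (f x) * deriv f x * deriv g y := by
    rw [huy_fun]
    exact ((hvxy.comp x hf.hasDerivAt).mul_const _).deriv
  have huy : deriv (fun Y => v (f x) (g Y)) y = deriv (fun Y => v (f x) Y) (g y) * deriv g y :=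
    congrFun huy_fun x
  simp only [mixedWronskian, hux, huy, huxy]
  ring

theorem stmt_0_general
    (u v : ℝ → ℝ → ℝ) (f g : ℝ → ℝ)
    (hv : ContDiff ℝ 2 (Function.uncurry v))
    (hf : ContDiff ℝ 2 f) (hg : ContDiff ℝ 2 g)
    (hf' : ∀ x : ℝ, deriv f x ≠ 0) (hg' : ∀ y : ℝ, deriv g y ≠ 0)
    (hrel : ∀ x y : ℝ, v (f x) (g y) * deriv f x * deriv g y = u x y) :
    ∀ x y : ℝ,
      (v (f x) (g y) * deriv (fun X : ℝ => deriv (fun Y : ℝ => v X Y) (g y)) (f x)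
          - deriv (fun X : ℝ => v X (g y)) (f x) * deriv (fun Y : ℝ => v (f x) Y) (g y))
        / (v (f x) (g y)) ^ 3
      = (u x y * deriv (fun X : ℝ => deriv (fun Y : ℝ => u X Y) y) x
          - deriv (fun X : ℝ => u X y) x * deriv (fun Y : ℝ => u x Y) y) / (u x y) ^ 3 := by
  intro x y
  change mixedWronskian v (f x) (g y) / _ = mixedWronskian u x y / _
  have hu : u = fun x y => v (f x) (g y) * deriv f x * deriv g y :=
    funext fun x => funext fun y => (hrel x y).symm
  have hvfg : ContDiff ℝ 2 (uncurry fun x y => v (f x) (g y)) := hv.comp (hf.prodMap hg)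
  have hf1 : Differentiable ℝ f := hf.differentiable (by norm_num)
  have hg1 : Differentiable ℝ g := hg.differentiable (by norm_num)
  have hf2 : Differentiable ℝ (deriv f) := (hf.iterate_deriv' 1 1).differentiable one_ne_zero
  have hg2 : Differentiable ℝ (deriv g) := (hg.iterate_deriv' 1 1).differentiable one_ne_zero
  have hW : mixedWronskian u x y
      = (deriv f x * deriv g y) ^ 3 * mixedWronskian v (f x) (g y) := by
    rw [hu, mixedWronskian_mul_separable hvfg (hf2 x) (hg2 y),
      mixedWronskian_comp_prodMap hv (hf1 x) (hg1 y)]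
    ring
  have hcube : u x y ^ 3 = (deriv f x * deriv g y) ^ 3 * v (f x) (g y) ^ 3 := by
    rw [← hrel]; ring
  rw [hW, hcube, mul_div_mul_left _ _ (pow_ne_zero 3 (mul_ne_zero (hf' x) (hg' y)))]

/-- Invariance of I₁,₁ = (u·u_xy − u_x·u_y)/u³ under X = f(x), Y = g(y),
U = u/(f′(x)·g′(y)). -/
theorem stmt_0
    (u v : ℝ → ℝ → ℝ) (f g : ℝ → ℝ)
    (hu : ContDiff ℝ 2 (Function.uncurry u))
    (hv : ContDiff ℝ 2 (Function.uncurry v))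
    (hf : ContDiff ℝ 2 f) (hg : ContDiff ℝ 2 g)
    (hu0 : ∀ x y : ℝ, u x y ≠ 0)
    (hf' : ∀ x : ℝ, deriv f x ≠ 0) (hg' : ∀ y : ℝ, deriv g y ≠ 0)
    (hrel : ∀ x y : ℝ, v (f x) (g y) * deriv f x * deriv g y = u x y) :
    ∀ x y : ℝ,
      (v (f x) (g y) * deriv (fun X : ℝ => deriv (fun Y : ℝ => v X Y) (g y)) (f x)
          - deriv (fun X : ℝ => v X (g y)) (f x) * deriv (fun Y : ℝ => v (f x) Y) (g y))
        / (v (f x) (g y)) ^ 3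
      = (u x y * deriv (fun X : ℝ => deriv (fun Y : ℝ => u X Y) y) x
          - deriv (fun X : ℝ => u X y) x * deriv (fun Y : ℝ => u x Y) y) / (u x y) ^ 3 :=
  stmt_0_general u v f g hv hf hg hf' hg' hrel
end

section
/- Let f : ℝ → ℝ be C², let x : ℝ → ℝ be C¹, and let u : ℝ² → ℝ be C² and nowhere vanishing, with f′(x(s)) ≠ 0 for all s ∈ ℝ. Define X(s) = f(x(s)) and U(s,t) = u(s,t)/f′(x(s)). Then for all (s,t) ∈ ℝ²: (i) U(s,t)·X′(s) = u(s,t)·x′(s); (ii) U_t/U = u_t/u; (iii) U_tt/U = u_tt/u; (iv) (U·U_st − U_s·U_t)/U² = (u·u_st − u_s·u_t)/u². That is, the expressions u·x_s, u_t/u, u_tt/u, and (u·u_st − u_s·u_t)/u² are invariant under the prolonged action of the pseudo-group X = f(x), Y = y, U = u/f′(x) written in computational variables (s,t), on parameterized surfaces with x = x(s) independent of t. -/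
/-! The substitution `U = u / f'(x(s))` rescales each `t`-slice of `u` by a nonzero constant, which
cancels in `u_t / u` and `u_tt / u`. Since `U_t / U = u_t / u` holds identically in `s`, its
`s`-derivative, which by the quotient rule is `(u u_st - u_s u_t) / u²`, is invariant too.
Finally `U X_s = (u / f'(x)) f'(x) x_s = u x_s` by the chain rule. -/

open Function

section

variable {𝕜 : Type*} [NontriviallyNormedField 𝕜]

theorem logDeriv_div_const (g : 𝕜 → 𝕜) {c : 𝕜} (hc : c ≠ 0) (t : 𝕜) :
    logDeriv (fun t' => g t' / c) t = logDeriv g t := by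
  simpa only [div_eq_mul_inv] using logDeriv_mul_const t _ (inv_ne_zero hc)

theorem deriv_deriv_div_const (g : 𝕜 → 𝕜) (c t : 𝕜) :
    deriv (deriv fun t' => g t' / c) t = deriv (deriv g) t / c := by
  rw [show (deriv fun t' => g t' / c) = fun t' => deriv g t' / c from
    funext fun _ => deriv_div_const c, deriv_div_const]

theorem deriv_logDeriv_right (w : 𝕜 → 𝕜 → 𝕜) {s t : 𝕜}
    (hw : DifferentiableAt 𝕜 (fun s' => w s' t) s)
    (hwt : DifferentiableAt 𝕜 (fun s' => deriv (w s') t) s) (hw0 : w s t ≠ 0) :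
    deriv (fun s' => logDeriv (w s') t) s
      = (w s t * deriv (fun s' => deriv (w s') t) s
          - deriv (fun s' => w s' t) s * deriv (w s) t) / w s t ^ 2 := by
  simp only [logDeriv_apply]
  rw [deriv_fun_div hwt hw hw0]
  ring

end

theorem DifferentiableAt.hasDerivAt_right {u : ℝ → ℝ → ℝ} {s t : ℝ}
    (hu : DifferentiableAt ℝ (uncurry u) (s, t)) :
    HasDerivAt (u s) (fderiv ℝ (uncurry u) (s, t) (0, 1)) t :=
  hu.hasFDerivAt.comp_hasDerivAt t ((hasDerivAt_const t s).prodMk (hasDerivAt_id t))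

theorem ContDiff.differentiable_deriv_right {u : ℝ → ℝ → ℝ} (hu : ContDiff ℝ 2 (uncurry u))
    (t : ℝ) : Differentiable ℝ fun s => deriv (u s) t := by
  have hpartial : (fun s => deriv (u s) t) = fun s => fderiv ℝ (uncurry u) (s, t) (0, 1) :=
    funext fun s => (hu.differentiable two_ne_zero (s, t)).hasDerivAt_right.deriv
  rw [hpartial]
  exact (((hu.fderiv_right (by norm_num)).comp (contDiff_id.prodMk contDiff_const)).clm_apply
    contDiff_const).differentiable one_ne_zero

theorem ContDiff.differentiable_left {u : ℝ → ℝ → ℝ} {n : WithTop ℕ∞}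
    (hu : ContDiff ℝ n (uncurry u)) (hn : n ≠ 0) (t : ℝ) : Differentiable ℝ fun s => u s t :=
  (hu.differentiable hn).comp (differentiable_id.prodMk (differentiable_const t))

/-- Invariance of u·x_s, u_t/u, u_tt/u and (u·u_st − u_s·u_t)/u² under the
prolonged action of X = f(x), Y = y, U = u/f′(x) in computational variables. -/
theorem stmt_1
    (f x : ℝ → ℝ) (u : ℝ → ℝ → ℝ)
    (hf : ContDiff ℝ 2 f) (hx : ContDiff ℝ 1 x)
    (hu : ContDiff ℝ 2 (Function.uncurry u))
    (hu0 : ∀ s t : ℝ, u s t ≠ 0)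
    (hf' : ∀ s : ℝ, deriv f (x s) ≠ 0)
    (X : ℝ → ℝ) (U : ℝ → ℝ → ℝ)
    (hX : ∀ s, X s = f (x s))
    (hU : ∀ s t, U s t = u s t / deriv f (x s)) :
    ∀ s t : ℝ,
      (U s t * deriv X s = u s t * deriv x s) ∧
      (deriv (fun t' => U s t') t / U s t = deriv (fun t' => u s t') t / u s t) ∧
      (deriv (deriv (fun t' => U s t')) t / U s t
        = deriv (deriv (fun t' => u s t')) t / u s t) ∧
      ((U s t * deriv (fun s' => deriv (fun t' => U s' t') t) s
          - deriv (fun s' => U s' t) s * deriv (fun t' => U s t') t) / (U s t) ^ 2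
        = (u s t * deriv (fun s' => deriv (fun t' => u s' t') t) s
          - deriv (fun s' => u s' t) s * deriv (fun t' => u s t') t) / (u s t) ^ 2) := by
  obtain rfl : X = fun s => f (x s) := funext hX
  obtain rfl : U = fun s t => u s t / deriv f (x s) := funext₂ hU
  intro s t
  have hx' : Differentiable ℝ x := hx.differentiable one_ne_zero
  have hf'x : Differentiable ℝ fun s => deriv f (x s) :=
    (hf.iterate_deriv' 1 1 |>.differentiable one_ne_zero).comp hx'
  have hlog : ∀ s', logDeriv (fun t' => u s' t' / deriv f (x s')) t = logDeriv (u s') t :=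
    fun s' => logDeriv_div_const _ (hf' s') t
  refine ⟨?_, hlog s, ?_, ?_⟩
  · rw [show (fun s => f (x s)) = f ∘ x from rfl,
      deriv_comp s ((hf.differentiable two_ne_zero) (x s)) (hx' s)]
    field_simp [hf' s]
  · rw [deriv_deriv_div_const, div_div_div_cancel_right₀ (hf' s)]
  · have hUs : DifferentiableAt ℝ (fun s' => u s' t / deriv f (x s')) s :=
      (hu.differentiable_left two_ne_zero t s).div (hf'x s) (hf' s)
    have hUst : DifferentiableAt ℝ
        (fun s' => deriv (fun t' => u s' t' / deriv f (x s')) t) s := by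
      simp only [deriv_div_const]
      exact (hu.differentiable_deriv_right t s).div (hf'x s) (hf' s)
    rw [← deriv_logDeriv_right _ hUs hUst (div_ne_zero (hu0 s t) (hf' s)), funext hlog,
      deriv_logDeriv_right u (hu.differentiable_left two_ne_zero t s)
        (hu.differentiable_deriv_right t s) (hu0 s t)]
end

section
/- Let x : ℤ → ℝ and u : ℤ × ℤ → ℝ, and let f, f̃ : ℝ → ℝ be functions such that for every m ∈ ℤ: x_{m+1} ≠ x_m, f(x_{m+1}) ≠ f(x_m), and f̃(f(x_{m+1})) ≠ f̃(f(x_m)). Define the transformed variables X_m = f(x_m) and U_{m,n} = u_{m,n}·(x_{m+1} − x_m)/(f(x_{m+1}) − f(x_m)), and then apply a second transformation: X̃_m = f̃(X_m) and Ũ_{m,n} = U_{m,n}·(X_{m+1} − X_m)/(f̃(X_{m+1}) − f̃(X_m)). Then X̃_m = (f̃∘f)(x_m) and Ũ_{m,n} = u_{m,n}·(x_{m+1} − x_m)/((f̃∘f)(x_{m+1}) − (f̃∘f)(x_m)) for all m, n ∈ ℤ. That is, the forward-difference discretization of the pseudo-group X = f(x), Y = y, U = u/f′(x), in which f′(x_m)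 is replaced by (f(x_{m+1}) − f(x_m))/(x_{m+1} − x_m), is closed under composition. -/
/-- The forward-difference discretization of the pseudo-group
X = f(x), Y = y, U = u/f′(x) is closed under composition. -/
theorem stmt_2
    (x : ℤ → ℝ) (u : ℤ → ℤ → ℝ) (f ftil : ℝ → ℝ)
    (hx : ∀ m : ℤ, x (m + 1) ≠ x m)
    (hf : ∀ m : ℤ, f (x (m + 1)) ≠ f (x m))
    (hff : ∀ m : ℤ, ftil (f (x (m + 1))) ≠ ftil (f (x m)))
    (X : ℤ → ℝ) (U : ℤ → ℤ → ℝ) (Xt : ℤ → ℝ) (Ut : ℤ → ℤ → ℝ)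
    (hX : ∀ m, X m = f (x m))
    (hU : ∀ m n, U m n = u m n * (x (m + 1) - x m) / (f (x (m + 1)) - f (x m)))
    (hXt : ∀ m, Xt m = ftil (X m))
    (hUt : ∀ m n, Ut m n = U m n * (X (m + 1) - X m) / (ftil (X (m + 1)) - ftil (X m))) :
    ∀ m n : ℤ, Xt m = (ftil ∘ f) (x m) ∧
      Ut m n = u m n * (x (m + 1) - x m) / ((ftil ∘ f) (x (m + 1)) - (ftil ∘ f) (x m)) := by
  intro m n
  constructor
  · simp [hXt, hX, Function.comp]
  · have h1 : f (x (m + 1)) - f (x m) ≠ 0 := sub_ne_zero.mpr (hf m)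
    rw [hUt, hU, hX, hX, Function.comp_apply, Function.comp_apply]
    field_simp
end

section
/- The centred discretization of the pseudo-group X = f(x), Y = y, U = u/f′(x) is not closed under composition. Precisely: there exist C^∞ strictly increasing bijections f, f̃ : ℝ → ℝ with everywhere positive derivative, and real numbers x₋₁ < x₀ < x₁, such that, writing c[g] = (1/2)·[(g(x₁) − g(x₀))/(x₁ − x₀) + (g(x₀) − g(x₋₁))/(x₀ − x₋₁)] for the centred difference approximation of g′(x₀), and c̃[h] = (1/2)·[(h(f(x₁)) − h(f(x₀)))/(f(x₁) − f(x₀)) + (h(f(x₀)) − h(f(x₋₁)))/(f(x₀) − f(x₋₁))] for the centred approximation of h′(f(x₀)) on the transformed mesh, one has c[f̃∘f] ≠ c̃[f̃]·c[f]. -/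
private lemma cubic_contDiff : ContDiff ℝ (⊤ : ℕ∞) (fun x : ℝ => x ^ 3 + x) := by
  fun_prop

private lemma cubic_strictMono : StrictMono (fun x : ℝ => x ^ 3 + x) := by
  intro a b h
  dsimp only
  nlinarith [sq_nonneg (a + b), sq_nonneg (a - b), sq_nonneg a, sq_nonneg b]

private lemma cubic_surj : Function.Surjective (fun x : ℝ => x ^ 3 + x) := by
  intro y
  have hc : Continuous (fun x : ℝ => x ^ 3 + x) := by fun_prop
  have h1 : Filter.Tendsto (fun x : ℝ => x ^ 3 + x) Filter.atTop Filter.atTop := by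
    apply Filter.tendsto_atTop_mono' _ _ Filter.tendsto_id
    filter_upwards [Filter.eventually_ge_atTop (0 : ℝ)] with x hx
    simp only [id]
    nlinarith [pow_nonneg hx 3]
  have h2 : Filter.Tendsto (fun x : ℝ => x ^ 3 + x) Filter.atBot Filter.atBot := by
    apply Filter.tendsto_atBot_mono' _ _ Filter.tendsto_id
    filter_upwards [Filter.eventually_le_atBot (0 : ℝ)] with x hx
    simp only [id]
    nlinarith [Odd.pow_nonpos (by decide : Odd 3) hx]
  obtain ⟨a, ha⟩ := h2.eventually (Filter.eventually_le_atBot y) |>.exists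
  obtain ⟨b, hb⟩ := h1.eventually (Filter.eventually_ge_atTop y) |>.exists
  exact intermediate_value_univ a b hc ⟨ha, hb⟩

private lemma cubic_deriv (x : ℝ) : deriv (fun x : ℝ => x ^ 3 + x) x = 3 * x ^ 2 + 1 := by
  have : HasDerivAt (fun x : ℝ => x ^ 3 + x) (3 * x ^ 2 + 1) x := by
    have h := ((hasDerivAt_pow 3 x).add (hasDerivAt_id x))
    simp at h
    exact h
  exact this.deriv

/-- The centred discretization of the pseudo-group X = f(x), Y = y, U = u/f′(x)
is not closed under composition. -/
theorem stmt_3 :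
    ∃ f ftil : ℝ → ℝ,
      ContDiff ℝ (⊤ : ℕ∞) f ∧ StrictMono f ∧ Function.Bijective f ∧ (∀ x : ℝ, 0 < deriv f x) ∧
      ContDiff ℝ (⊤ : ℕ∞) ftil ∧ StrictMono ftil ∧ Function.Bijective ftil ∧
      (∀ x : ℝ, 0 < deriv ftil x) ∧
      ∃ xm x0 x1 : ℝ, xm < x0 ∧ x0 < x1 ∧
        (1 / 2) * (((ftil ∘ f) x1 - (ftil ∘ f) x0) / (x1 - x0)
               + ((ftil ∘ f) x0 - (ftil ∘ f) xm) / (x0 - xm))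
        ≠ ((1 / 2) * ((ftil (f x1) - ftil (f x0)) / (f x1 - f x0)
               + (ftil (f x0) - ftil (f xm)) / (f x0 - f xm)))
          * ((1 / 2) * ((f x1 - f x0) / (x1 - x0) + (f x0 - f xm) / (x0 - xm))) := by
  refine ⟨fun x => x ^ 3 + x, fun x => x ^ 3 + x,
    cubic_contDiff, cubic_strictMono, ⟨cubic_strictMono.injective, cubic_surj⟩,
    fun x => by rw [cubic_deriv]; positivity,
    cubic_contDiff, cubic_strictMono, ⟨cubic_strictMono.injective, cubic_surj⟩,
    fun x => by rw [cubic_deriv]; positivity,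
    -1, 0, 2, by norm_num, by norm_num, ?_⟩
  simp only [Function.comp]
  norm_num
end

section
/- The discretized pseudo-group action X_m = f(x_m), Y_n = y_n, U_{m,n} = u_{m,n}·(x_{m+1} − x_m)/(f(x_{m+1}) − f(x_m)) acts freely: let x : ℤ → ℝ satisfy x_{m+1} ≠ x_m for all m, let u : ℤ × ℤ → ℝ be nowhere zero, let f : ℝ → ℝ, and fix m, n ∈ ℤ and k ≥ 0 with f(x_{m+ℓ+1}) ≠ f(x_{m+ℓ}) for 0 ≤ ℓ ≤ k. If f(x_m) = x_m and, for every 0 ≤ ℓ ≤ k, u_{m+ℓ,n}·(x_{m+ℓ+1} − x_{m+ℓ})/(f(x_{m+ℓ+1}) − f(x_{m+ℓ})) = u_{m+ℓ,n}, then f(x_{m+ℓ}) = x_{m+ℓ} for every 0 ≤ ℓ ≤ k + 1. -/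
/-!
Cancelling the nonzero factor `u_{m+ℓ,n}` and the nonzero denominator in the fixing condition
gives `f(x_{m+ℓ+1}) - f(x_{m+ℓ}) = x_{m+ℓ+1} - x_{m+ℓ}`: the map `f` and the identity have the
same increments along the mesh. Since they agree at `x_m`, they agree at every later mesh point.
-/

theorem eq_of_mul_div_eq_self {K : Type*} [Field K] {a b c : K} (hc : c ≠ 0) (hb : b ≠ 0)
    (h : c * a / b = c) : a = b := by
  rw [div_eq_iff hb] at h
  exact mul_left_cancel₀ hc h

theorem eq_of_eq_of_sub_eq_sub {G : Type*} [AddGroup G] {g h : ℕ → G} {k : ℕ}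
    (h₀ : g 0 = h 0) (hstep : ∀ l ≤ k, g (l + 1) - g l = h (l + 1) - h l) :
    ∀ l ≤ k + 1, g l = h l := by
  intro l hl
  induction l with
  | zero => exact h₀
  | succ l ih =>
    have hstep_l := hstep l (Nat.lt_succ_iff.mp hl)
    rwa [ih (Nat.le_of_succ_le hl), sub_left_inj] at hstep_l

theorem stmt_4_general
    (x : ℤ → ℝ) (u : ℤ → ℤ → ℝ) (f : ℝ → ℝ) (m n : ℤ) (k : ℕ)
    (hu : ∀ m n : ℤ, u m n ≠ 0)
    (hf : ∀ l : ℕ, l ≤ k → f (x (m + l + 1)) ≠ f (x (m + l)))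
    (hid : f (x m) = x m)
    (hfix : ∀ l : ℕ, l ≤ k →
      u (m + l) n * (x (m + l + 1) - x (m + l)) / (f (x (m + l + 1)) - f (x (m + l)))
        = u (m + l) n) :
    ∀ l : ℕ, l ≤ k + 1 → f (x (m + l)) = x (m + l) := by
  refine eq_of_eq_of_sub_eq_sub (g := fun l : ℕ ↦ f (x (m + l))) (h := fun l : ℕ ↦ x (m + l))
    (by simpa using hid) fun l hl ↦ ?_
  have hincr := eq_of_mul_div_eq_self (hu (m + l) n) (sub_ne_zero.mpr (hf l hl)) (hfix l hl)
  simpa only [Nat.cast_succ, ← add_assoc] using hincr.symm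

/-- Freeness of the discretized pseudo-group action
X_m = f(x_m), Y_n = y_n, U_{m,n} = u_{m,n}·Δx_m/Δf_m. -/
theorem stmt_4
    (x : ℤ → ℝ) (u : ℤ → ℤ → ℝ) (f : ℝ → ℝ) (m n : ℤ) (k : ℕ)
    (hx : ∀ m : ℤ, x (m + 1) ≠ x m)
    (hu : ∀ m n : ℤ, u m n ≠ 0)
    (hf : ∀ l : ℕ, l ≤ k → f (x (m + l + 1)) ≠ f (x (m + l)))
    (hid : f (x m) = x m)
    (hfix : ∀ l : ℕ, l ≤ k →
      u (m + l) n * (x (m + l + 1) - x (m + l)) / (f (x (m + l + 1)) - f (x (m + l)))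
        = u (m + l) n) :
    ∀ l : ℕ, l ≤ k + 1 → f (x (m + l)) = x (m + l) :=
  stmt_4_general x u f m n k hu hf hid hfix
end

section
/- Let k ≥ 1 and let F be a real-valued function of 2k real variables (x₁, …, x_k, u₁, …, u_k), defined on the set Ω of tuples with x₁ < x₂ < ⋯ < x_k and u_i > 0 for all i. Suppose F is invariant under the product action of orientation-preserving diffeomorphisms: for every C^∞ strictly increasing bijection f : ℝ → ℝ with f′ > 0 everywhere and every (x, u) ∈ Ω, F(f(x₁), …, f(x_k), u₁/f′(x₁), …, u_k/f′(x_k)) = F(x₁, …, x_k, u₁, …, u_k). Then F is constant on Ω. Consequently, on a generic mesh the product action of the pseudo-group X = f(x), Y = y, U = u/f′(x) admits no joint invariants depending on the variables x_m and u_{m,n} beyond constants. -/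
open Polynomial Filter

lemma poly_contDiff (p : Polynomial ℝ) : ContDiff ℝ (⊤ : ℕ∞) (fun x : ℝ => p.eval x) := by
  apply AnalyticOnNhd.contDiff
  have := (analyticOnNhd_id (𝕜 := ℝ) (s := Set.univ) (E := ℝ)).aeval_polynomial p
  have h2 : (fun x : ℝ => p.eval x) = fun x : ℝ => aeval (id x) p := by
    funext x; simp
  rw [h2]; exact this

noncomputable def ratF (P Q : Polynomial ℝ) : ℝ → ℝ := fun t => P.eval t / Q.eval t

lemma ratF_contDiff (P Q : Polynomial ℝ) (hQ : ∀ t, Q.eval t ≠ 0) :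
    ContDiff ℝ (⊤ : ℕ∞) (ratF P Q) :=
  (poly_contDiff P).div (poly_contDiff Q) hQ

lemma ratF_hasDerivAt (P Q : Polynomial ℝ) (hQ : ∀ t, Q.eval t ≠ 0) (t : ℝ) :
    HasDerivAt (ratF P Q) (ratF (derivative P * Q - P * derivative Q) (Q ^ 2) t) t := by
  have h := ((P.hasDerivAt t).div (Q.hasDerivAt t) (hQ t))
  have : ratF (derivative P * Q - P * derivative Q) (Q ^ 2) t
      = ((derivative P).eval t * Q.eval t - P.eval t * (derivative Q).eval t) / (Q.eval t) ^ 2 := by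
    simp [ratF]
  rw [this]; exact h

lemma ratF_deriv (P Q : Polynomial ℝ) (hQ : ∀ t, Q.eval t ≠ 0) :
    deriv (ratF P Q) = ratF (derivative P * Q - P * derivative Q) (Q ^ 2) := by
  funext t; exact (ratF_hasDerivAt P Q hQ t).deriv

lemma ratF_tendsto_atTop (P Q : Polynomial ℝ) (h : P.degree < Q.degree) :
    Tendsto (ratF P Q) atTop (nhds 0) :=
  Polynomial.div_tendsto_zero_of_degree_lt P Q h

lemma ratF_tendsto_atBot (P Q : Polynomial ℝ) (h : P.degree < Q.degree) :
    Tendsto (ratF P Q) atBot (nhds 0) := by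
  have hc : ∀ (R : Polynomial ℝ), (R.comp (-X)).degree = R.degree := by
    intro R
    by_cases hR : R = 0
    · simp [hR]
    · have hRR : (R.comp (-X)).comp (-X) = R := by
        rw [comp_assoc]; simp
      have hne : R.comp (-X) ≠ 0 := by
        intro h0
        rw [h0] at hRR; simp at hRR; exact hR hRR.symm
      rw [degree_eq_natDegree hR, degree_eq_natDegree hne, natDegree_comp]
      simp
  have h2 : (P.comp (-X)).degree < (Q.comp (-X)).degree := by rw [hc, hc]; exact h
  have h3 := Polynomial.div_tendsto_zero_of_degree_lt _ _ h2
  have h4 : Tendsto (fun t : ℝ => -t) atBot atTop := tendsto_neg_atBot_atTop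
  have h5 := h3.comp h4
  have : (fun x : ℝ => eval x (P.comp (-X)) / eval x (Q.comp (-X))) ∘ (fun t : ℝ => -t)
      = ratF P Q := by
    funext t; simp [Function.comp, eval_comp, ratF]
  rwa [this] at h5


lemma numer_deg_lt (P Q : Polynomial ℝ) (hP : P.degree < Q.degree) (hQ0 : Q ≠ 0) :
    (derivative P * Q - P * derivative Q).degree < (Q ^ 2).degree := by
  have hQb : Q.degree ≠ ⊥ := degree_ne_bot.mpr hQ0
  have hQ2 : (Q ^ 2).degree = Q.degree + Q.degree := by
    rw [pow_two, degree_mul]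
  rw [hQ2]
  by_cases hP0 : P = 0
  · simp [hP0]
    exact bot_lt_iff_ne_bot.mpr (by
      intro hb
      exact hQb hb)
  refine lt_of_le_of_lt (degree_sub_le _ _) (max_lt ?_ ?_)
  · rw [degree_mul]
    have h1 : (derivative P).degree < Q.degree :=
      lt_trans (degree_derivative_lt hP0) hP
    exact WithBot.add_lt_add_right hQb h1
  · rw [degree_mul]
    by_cases hQ' : derivative Q = 0
    · simp [hQ']
      exact bot_lt_iff_ne_bot.mpr (by
        intro hb
        exact hQb hb)
    · have h1 : (derivative Q).degree < Q.degree := degree_derivative_lt hQ0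
      have h2 : P.degree + (derivative Q).degree < Q.degree + (derivative Q).degree :=
        WithBot.add_lt_add_right (degree_ne_bot.mpr hQ') hP
      have h3 : Q.degree + (derivative Q).degree < Q.degree + Q.degree :=
        WithBot.add_lt_add_left hQb h1
      exact lt_trans h2 h3

lemma bounded_of_tendsto (f : ℝ → ℝ) (hc : Continuous f) (ht : Tendsto f atTop (nhds 0))
    (hb : Tendsto f atBot (nhds 0)) : ∃ K, 0 < K ∧ ∀ t, |f t| ≤ K := by
  have h1 : ∀ᶠ t in atTop, |f t| < 1 := by
    have := ht.eventually (eventually_abs_sub_lt 0 one_pos)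
    simpa using this
  have h2 : ∀ᶠ t in atBot, |f t| < 1 := by
    have := hb.eventually (eventually_abs_sub_lt 0 one_pos)
    simpa using this
  obtain ⟨T, hT⟩ := eventually_atTop.mp h1
  obtain ⟨B, hB⟩ := eventually_atBot.mp h2
  obtain ⟨C, hC⟩ := (isCompact_Icc (a := B) (b := T)).exists_bound_of_continuousOn
    (hc.continuousOn (s := Set.Icc B T))
  refine ⟨max C 1 + 1, by positivity, fun t => ?_⟩
  rcases le_total t B with h | h
  · have := hB t h
    calc |f t| ≤ 1 := le_of_lt this
    _ ≤ max C 1 + 1 := by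
      have := le_max_right C 1; linarith
  rcases le_total t T with h' | h'
  · have := hC t ⟨h, h'⟩
    calc |f t| ≤ C := by simpa using this
    _ ≤ max C 1 + 1 := by have := le_max_left C 1; linarith
  · have := hT t h'
    calc |f t| ≤ 1 := le_of_lt this
    _ ≤ max C 1 + 1 := by have := le_max_right C 1; linarith


noncomputable def PA (S : Finset ℝ) : Polynomial ℝ := ∏ p ∈ S, (X - C p) ^ 2
noncomputable def QA (S : Finset ℝ) : Polynomial ℝ := (X ^ 2 + C 1) ^ (S.card + 1)

lemma PA_monic (S : Finset ℝ) : (PA S).Monic :=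
  monic_prod_of_monic _ _ (fun p _ => (monic_X_sub_C p).pow 2)

lemma QA_eval_pos (S : Finset ℝ) (t : ℝ) : 0 < (QA S).eval t := by
  simp only [QA, eval_pow, eval_add, eval_C, eval_X]
  positivity

lemma QA_eval_ne (S : Finset ℝ) (t : ℝ) : (QA S).eval t ≠ 0 := (QA_eval_pos S t).ne'

lemma PA_eval (S : Finset ℝ) (t : ℝ) : (PA S).eval t = ∏ p ∈ S, (t - p) ^ 2 := by
  simp [PA, eval_prod]

lemma PA_eval_nonneg (S : Finset ℝ) (t : ℝ) : 0 ≤ (PA S).eval t := by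
  rw [PA_eval]; exact Finset.prod_nonneg fun p _ => sq_nonneg _

lemma PA_eval_pos (S : Finset ℝ) (t : ℝ) (ht : t ∉ S) : 0 < (PA S).eval t := by
  rw [PA_eval]
  exact Finset.prod_pos fun p hp => by
    have : t - p ≠ 0 := sub_ne_zero.mpr (fun h => ht (h ▸ hp))
    exact pow_two_pos_of_ne_zero this

lemma PA_eval_zero (S : Finset ℝ) (p : ℝ) (hp : p ∈ S) : (PA S).eval p = 0 := by
  rw [PA_eval]
  exact Finset.prod_eq_zero hp (by simp)

lemma PA_deriv_zero (S : Finset ℝ) (p : ℝ) (hp : p ∈ S) :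
    (derivative (PA S)).eval p = 0 := by
  have hfact : PA S = (X - C p) ^ 2 * ∏ q ∈ S.erase p, (X - C q) ^ 2 :=
    (Finset.mul_prod_erase S _ hp).symm
  rw [hfact]
  simp [derivative_mul, derivative_pow]

lemma PA_degree (S : Finset ℝ) : (PA S).degree = (2 * S.card : ℕ) := by
  rw [PA, degree_prod]
  have : ∀ p ∈ S, ((X - C p) ^ 2 : Polynomial ℝ).degree = (2:ℕ) := by
    intro p _
    rw [degree_pow, degree_X_sub_C]
    rfl
  rw [Finset.sum_congr rfl this]
  simp [Finset.sum_const, mul_comm]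

lemma QA_degree (S : Finset ℝ) : (QA S).degree = (2 * (S.card + 1) : ℕ) := by
  rw [QA, degree_pow, degree_X_pow_add_C (by norm_num : 0 < 2)]
  simp [mul_comm]

lemma PA_lt_QA (S : Finset ℝ) : (PA S).degree < (QA S).degree := by
  rw [PA_degree, QA_degree]
  exact_mod_cast by omega

noncomputable def PB (S : Finset ℝ) (q : ℝ) : Polynomial ℝ := (X - C q) * PA S

lemma PB_eval_zero_mem (S : Finset ℝ) (q p : ℝ) (hp : p ∈ S) : (PB S q).eval p = 0 := by
  simp [PB, PA_eval_zero S p hp]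

lemma PB_eval_zero_q (S : Finset ℝ) (q : ℝ) : (PB S q).eval q = 0 := by
  simp [PB]

lemma PB_deriv_mem (S : Finset ℝ) (q p : ℝ) (hp : p ∈ S) :
    (derivative (PB S q)).eval p = 0 := by
  rw [PB, derivative_mul]
  simp [PA_eval_zero S p hp, PA_deriv_zero S p hp]

lemma PB_deriv_q (S : Finset ℝ) (q : ℝ) :
    (derivative (PB S q)).eval q = (PA S).eval q := by
  rw [PB, derivative_mul]
  simp

lemma PB_lt_QA (S : Finset ℝ) (q : ℝ) : (PB S q).degree < (QA S).degree := by
  rw [PB, degree_mul, degree_X_sub_C, PA_degree, QA_degree]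
  have h : (1 + 2 * S.card : ℕ) < 2 * (S.card + 1) := by omega
  exact_mod_cast h


lemma diffeo_lemma (φ : ℝ → ℝ) (hφ : ContDiff ℝ (⊤ : ℕ∞) φ) (K γ : ℝ) (hK : 0 < K)
    (hKb : ∀ t, |deriv φ t| ≤ K) (hγ : |γ| ≤ 1 / (2 * K)) :
    ContDiff ℝ (⊤ : ℕ∞) (fun t => t + γ * φ t) ∧ StrictMono (fun t => t + γ * φ t) ∧
      Function.Bijective (fun t => t + γ * φ t) ∧
      (∀ t, deriv (fun t => t + γ * φ t) t = 1 + γ * deriv φ t) ∧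
      (∀ t, 0 < deriv (fun t => t + γ * φ t) t) ∧
      (∀ t, (1:ℝ)/2 ≤ 1 + γ * deriv φ t) := by
  have hdφ : Differentiable ℝ φ := hφ.differentiable (by simp)
  set h : ℝ → ℝ := fun t => t + γ * φ t with hh
  have hbound : ∀ t, (1:ℝ)/2 ≤ 1 + γ * deriv φ t := by
    intro t
    have h1 : |γ * deriv φ t| ≤ 1/2 := by
      rw [abs_mul]
      calc |γ| * |deriv φ t| ≤ (1/(2*K)) * K :=
        mul_le_mul hγ (hKb t) (abs_nonneg _) (by positivity)
      _ = 1/2 := by field_simp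
    have := abs_le.mp h1
    linarith [this.1]
  have hder : ∀ t, HasDerivAt h (1 + γ * deriv φ t) t := by
    intro t
    exact (hasDerivAt_id t).add (((hdφ t).hasDerivAt).const_mul γ)
  have hderiv : ∀ t, deriv h t = 1 + γ * deriv φ t := fun t => (hder t).deriv
  have hpos : ∀ t, 0 < deriv h t := by
    intro t; rw [hderiv t]; linarith [hbound t]
  have hmono : StrictMono h := strictMono_of_deriv_pos hpos
  have hcd : ContDiff ℝ (⊤ : ℕ∞) h := contDiff_id.add (contDiff_const.mul hφ)
  have hcont : Continuous h := hcd.continuous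
  -- lower/upper linear bounds
  have hHdiff : Differentiable ℝ (fun t => h t - t/2) := by
    have : Differentiable ℝ h := fun t => (hder t).differentiableAt
    exact this.sub (differentiable_id.div_const 2)
  have hHmono : Monotone (fun t => h t - t/2) := by
    apply monotone_of_deriv_nonneg hHdiff
    intro t
    have : HasDerivAt (fun t => h t - t/2) ((1 + γ * deriv φ t) - 1/2) t :=
      (hder t).sub ((hasDerivAt_id t).div_const 2)
    rw [this.deriv]
    linarith [hbound t]
  have hub : ∀ t ≥ (0:ℝ), h 0 - 0/2 + t/2 ≤ h t := by
    intro t ht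
    have := hHmono ht
    simp only at this
    linarith
  have hlb : ∀ t ≤ (0:ℝ), h t ≤ h 0 - 0/2 + t/2 := by
    intro t ht
    have := hHmono ht
    simp only at this
    linarith
  have htop : Tendsto h atTop atTop := by
    apply tendsto_atTop_mono' atTop (f₁ := fun t => h 0 - 0/2 + t/2)
    · filter_upwards [eventually_ge_atTop (0:ℝ)] with t ht using hub t ht
    · exact tendsto_atTop_add_const_left _ _ (tendsto_id.atTop_div_const (by norm_num : (0:ℝ) < 2))
  have hbot : Tendsto h atBot atBot := by
    apply tendsto_atBot_mono' atBot (f₁ := fun t => h 0 - 0/2 + t/2)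
    · filter_upwards [eventually_le_atBot (0:ℝ)] with t ht using hlb t ht
    · exact tendsto_atBot_add_const_left _ _ (tendsto_id.atBot_div_const (by norm_num : (0:ℝ) < 2))
  have hsurj : Function.Surjective h := hcont.surjective htop hbot
  exact ⟨hcd, hmono, ⟨hmono.injective, hsurj⟩, hderiv, hpos, hbound⟩


lemma ratF_deriv_bound (P Q : Polynomial ℝ) (hQ : ∀ t, Q.eval t ≠ 0)
    (hdeg : P.degree < Q.degree) (hQ0 : Q ≠ 0) :
    ∃ K, 0 < K ∧ ∀ t, |deriv (ratF P Q) t| ≤ K := by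
  rw [ratF_deriv P Q hQ]
  have hQ2 : ∀ t, (Q ^ 2).eval t ≠ 0 := by
    intro t; rw [eval_pow]; exact pow_ne_zero _ (hQ t)
  have hd := numer_deg_lt P Q hdeg hQ0
  exact bounded_of_tendsto _ (ratF_contDiff _ _ hQ2).continuous
    (ratF_tendsto_atTop _ _ hd) (ratF_tendsto_atBot _ _ hd)

lemma hstep (k : ℕ) (F : (Fin k → ℝ) → (Fin k → ℝ) → ℝ)
    (hinv : ∀ f : ℝ → ℝ,
      ContDiff ℝ (⊤ : ℕ∞) f → StrictMono f → Function.Bijective f → (∀ t : ℝ, 0 < deriv f t) →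
      ∀ x u : Fin k → ℝ, StrictMono x → (∀ i, 0 < u i) →
        F (fun i => f (x i)) (fun i => u i / deriv f (x i)) = F x u)
    (φ : ℝ → ℝ) (hφ : ContDiff ℝ (⊤ : ℕ∞) φ) (K γ : ℝ) (hK : 0 < K)
    (hKb : ∀ t, |deriv φ t| ≤ K) (hγ : |γ| ≤ 1 / (2 * K))
    (y v : Fin k → ℝ) (hy : StrictMono y) (hv : ∀ s, 0 < v s) :
    F (fun s => y s + γ * φ (y s)) (fun s => v s / (1 + γ * deriv φ (y s))) = F y v ∧
      StrictMono (fun s => y s + γ * φ (y s)) ∧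
      (∀ s, 0 < v s / (1 + γ * deriv φ (y s))) := by
  obtain ⟨hcd, hmono, hbij, hder, hpos, hbound⟩ := diffeo_lemma φ hφ K γ hK hKb hγ
  have h1 := hinv _ hcd hmono hbij hpos y v hy hv
  have h2 : (fun s => v s / deriv (fun t => t + γ * φ t) (y s))
      = (fun s => v s / (1 + γ * deriv φ (y s))) := by
    funext s; rw [hder]
  rw [h2] at h1
  refine ⟨h1, ?_, ?_⟩
  · exact fun a b hab => hmono (hy hab)
  · intro s
    have := hbound (y s)
    have := hv s
    positivity

lemma Bmove (k : ℕ) (F : (Fin k → ℝ) → (Fin k → ℝ) → ℝ)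
    (hinv : ∀ f : ℝ → ℝ,
      ContDiff ℝ (⊤ : ℕ∞) f → StrictMono f → Function.Bijective f → (∀ t : ℝ, 0 < deriv f t) →
      ∀ x u : Fin k → ℝ, StrictMono x → (∀ i, 0 < u i) →
        F (fun i => f (x i)) (fun i => u i / deriv f (x i)) = F x u)
    (y v : Fin k → ℝ) (hy : StrictMono y) (hv : ∀ s, 0 < v s) (i : Fin k)
    (c : ℝ) (hc : 0 < c) :
    ∃ v₂ : Fin k → ℝ, (∀ s, s ≠ i → v₂ s = v s) ∧ v₂ i = c ∧ (∀ s, 0 < v₂ s) ∧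
      F y v₂ = F y v := by
  classical
  set q := y i with hq
  set S : Finset ℝ := Finset.image y (Finset.univ.erase i) with hS
  have hqS : q ∉ S := by
    intro hmem
    rw [hS] at hmem
    obtain ⟨s, hs, hsy⟩ := Finset.mem_image.mp hmem
    exact (Finset.mem_erase.mp hs).1 (hy.injective hsy)
  have hySmem : ∀ s : Fin k, s ≠ i → y s ∈ S := by
    intro s hs
    exact Finset.mem_image.mpr ⟨s, Finset.mem_erase.mpr ⟨hs, Finset.mem_univ s⟩, rfl⟩
  have hQA0 : QA S ≠ 0 := fun h => QA_eval_ne S 0 (by rw [h]; simp)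
  set P : Polynomial ℝ := PB S q with hP
  set φ : ℝ → ℝ := ratF P (QA S) with hφdef
  have hφcd : ContDiff ℝ (⊤ : ℕ∞) φ := ratF_contDiff _ _ (QA_eval_ne S)
  have hderφ : deriv φ = ratF (Polynomial.derivative P * QA S - P * Polynomial.derivative (QA S)) ((QA S) ^ 2) :=
    ratF_deriv _ _ (QA_eval_ne S)
  -- values
  have hφy : ∀ s : Fin k, φ (y s) = 0 := by
    intro s
    by_cases hs : s = i
    · subst hs
      simp [hφdef, ratF, hP, PB_eval_zero_q]
      exact Or.inl (PB_eval_zero_q S q)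
    · simp [hφdef, ratF, hP, PB_eval_zero_mem S q (y s) (hySmem s hs)]
  have hderφy : ∀ s : Fin k, s ≠ i → deriv φ (y s) = 0 := by
    intro s hs
    rw [hderφ]
    simp [ratF, hP, Polynomial.eval_sub, Polynomial.eval_mul,
      PB_eval_zero_mem S q (y s) (hySmem s hs), PB_deriv_mem S q (y s) (hySmem s hs)]
  set w : ℝ := deriv φ q with hw
  have hwval : w = (PA S).eval q / (QA S).eval q := by
    rw [hw, hderφ]
    simp only [ratF, hP, Polynomial.eval_sub, Polynomial.eval_mul, Polynomial.eval_pow,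
      PB_eval_zero_q, PB_deriv_q, zero_mul, mul_zero, sub_zero]
    rw [pow_two]
    rw [mul_div_mul_right _ _ (QA_eval_ne S q)]
  have hwpos : 0 < w := by
    rw [hwval]
    exact div_pos (PA_eval_pos S q hqS) (QA_eval_pos S q)
  obtain ⟨K, hK, hKb⟩ := ratF_deriv_bound P (QA S) (QA_eval_ne S) (PB_lt_QA S q) hQA0
  set ε : ℝ := 1 / (2 * K) with hε
  have hεpos : 0 < ε := by positivity
  set ε₀ : ℝ := min (1/2) (ε * w) with hε₀
  have hε₀pos : 0 < ε₀ := lt_min (by norm_num) (by positivity)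
  have hε₀half : ε₀ ≤ 1/2 := min_le_left _ _
  -- single step
  have step : ∀ v' : Fin k → ℝ, (∀ s, 0 < v' s) → ∀ γ' : ℝ, |γ'| ≤ ε₀ →
      ∃ v₂ : Fin k → ℝ, (∀ s, s ≠ i → v₂ s = v' s) ∧ v₂ i = v' i / (1 + γ') ∧
        (∀ s, 0 < v₂ s) ∧ F y v₂ = F y v' := by
    intro v' hv' γ' hγ'
    have hγw : |γ' / w| ≤ ε := by
      rw [abs_div, abs_of_pos hwpos, div_le_iff₀ hwpos]
      calc |γ'| ≤ ε₀ := hγ'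
      _ ≤ ε * w := min_le_right _ _
    obtain ⟨hF, _, hpos2⟩ := hstep k F hinv φ hφcd K (γ' / w) hK hKb hγw y v' hy hv'
    have hyfix : (fun s => y s + (γ' / w) * φ (y s)) = y := by
      funext s; rw [hφy s]; ring
    rw [hyfix] at hF
    refine ⟨(fun s => v' s / (1 + γ' / w * deriv φ (y s))), ?_, ?_, hpos2, hF⟩
    · intro s hs
      show v' s / (1 + γ' / w * deriv φ (y s)) = v' s
      rw [hderφy s hs]
      simp
    · show v' i / (1 + γ' / w * deriv φ (y i)) = v' i / (1 + γ')
      rw [← hq, ← hw, div_mul_cancel₀ _ (ne_of_gt hwpos)]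
  -- reach any c > 0 as divisor
  have reach : ∀ c' : ℝ, 0 < c' →
      ∃ v₂ : Fin k → ℝ, (∀ s, s ≠ i → v₂ s = v s) ∧ v₂ i = v i / c' ∧
        (∀ s, 0 < v₂ s) ∧ F y v₂ = F y v := by
    have hup : ∀ n : ℕ, ∀ c' : ℝ, 1 ≤ c' → c' ≤ (1 + ε₀) ^ n →
        ∃ v₂ : Fin k → ℝ, (∀ s, s ≠ i → v₂ s = v s) ∧ v₂ i = v i / c' ∧
          (∀ s, 0 < v₂ s) ∧ F y v₂ = F y v := by
      intro n
      induction n with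
      | zero =>
        intro c' h1 h2
        have : c' = 1 := le_antisymm (by simpa using h2) h1
        subst this
        exact ⟨v, fun s _ => rfl, by simp, hv, rfl⟩
      | succ n ih =>
        intro c' h1 h2
        by_cases hcase : c' ≤ 1 + ε₀
        · obtain ⟨v₂, ha, hb, hc2, hd⟩ := step v hv (c' - 1)
            (by rw [abs_of_nonneg (by linarith)]; linarith)
          exact ⟨v₂, ha, by rw [hb]; ring_nf, hc2, hd⟩
        · push_neg at hcase
          have h1' : 1 ≤ c' / (1 + ε₀) := by
            rw [le_div_iff₀ (by linarith)]; linarith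
          have h2' : c' / (1 + ε₀) ≤ (1 + ε₀) ^ n := by
            rw [div_le_iff₀ (by linarith)]
            calc c' ≤ (1 + ε₀) ^ (n + 1) := h2
            _ = (1 + ε₀) ^ n * (1 + ε₀) := by ring
          obtain ⟨v₂, ha, hb, hc2, hd⟩ := ih (c' / (1 + ε₀)) h1' h2'
          obtain ⟨v₃, ha', hb', hc', hd'⟩ := step v₂ hc2 ε₀
            (by rw [abs_of_pos hε₀pos])
          refine ⟨v₃, ?_, ?_, hc', by rw [hd', hd]⟩
          · intro s hs; rw [ha' s hs, ha s hs]
          · rw [hb', hb]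
            field_simp
    have hdown : ∀ n : ℕ, ∀ c' : ℝ, 0 < c' → c' ≤ 1 → (1 - ε₀) ^ n < c' →
        ∃ v₂ : Fin k → ℝ, (∀ s, s ≠ i → v₂ s = v s) ∧ v₂ i = v i / c' ∧
          (∀ s, 0 < v₂ s) ∧ F y v₂ = F y v := by
      intro n
      induction n with
      | zero =>
        intro c' h0 h1 h2
        simp at h2
        linarith
      | succ n ih =>
        intro c' h0 h1 h2
        by_cases hcase : 1 - ε₀ ≤ c'
        · obtain ⟨v₂, ha, hb, hc2, hd⟩ := step v hv (c' - 1)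
            (by rw [abs_of_nonpos (by linarith)]; linarith)
          exact ⟨v₂, ha, by rw [hb]; ring_nf, hc2, hd⟩
        · push_neg at hcase
          have hempos : (0:ℝ) < 1 - ε₀ := by linarith
          have h0' : 0 < c' / (1 - ε₀) := by positivity
          have h1' : c' / (1 - ε₀) ≤ 1 := by
            rw [div_le_one hempos]; linarith
          have h2' : (1 - ε₀) ^ n < c' / (1 - ε₀) := by
            rw [lt_div_iff₀ hempos]
            calc (1 - ε₀) ^ n * (1 - ε₀) = (1 - ε₀) ^ (n + 1) := by ring
            _ < c' := h2
          obtain ⟨v₂, ha, hb, hc2, hd⟩ := ih (c' / (1 - ε₀)) h0' h1' h2'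
          obtain ⟨v₃, ha', hb', hc', hd'⟩ := step v₂ hc2 (-ε₀)
            (by rw [abs_neg, abs_of_pos hε₀pos])
          refine ⟨v₃, ?_, ?_, hc', by rw [hd', hd]⟩
          · intro s hs; rw [ha' s hs, ha s hs]
          · rw [hb', hb]
            have : 1 + -ε₀ = 1 - ε₀ := by ring
            rw [this]
            field_simp
    intro c' hc'
    rcases le_total 1 c' with h | h
    · obtain ⟨n, hn⟩ := pow_unbounded_of_one_lt c' (by linarith : (1:ℝ) < 1 + ε₀)
      exact hup n c' h hn.le
    · obtain ⟨n, hn⟩ := exists_pow_lt_of_lt_one hc' (by linarith : 1 - ε₀ < 1)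
      exact hdown n c' hc' h hn
  obtain ⟨v₂, ha, hb, hc2, hd⟩ := reach (v i / c) (div_pos (hv i) hc)
  refine ⟨v₂, ha, ?_, hc2, hd⟩
  rw [hb]
  have h1 : v i ≠ 0 := (hv i).ne'
  have h2 : c ≠ 0 := hc.ne'
  field_simp

lemma Amove (k : ℕ) (F : (Fin k → ℝ) → (Fin k → ℝ) → ℝ)
    (hinv : ∀ f : ℝ → ℝ,
      ContDiff ℝ (⊤ : ℕ∞) f → StrictMono f → Function.Bijective f → (∀ t : ℝ, 0 < deriv f t) →
      ∀ x u : Fin k → ℝ, StrictMono x → (∀ i, 0 < u i) →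
        F (fun i => f (x i)) (fun i => u i / deriv f (x i)) = F x u)
    (i : Fin k) (y₀ v₀ : Fin k → ℝ) (hy₀ : StrictMono y₀) (hv₀ : ∀ s, 0 < v₀ s)
    (q' : ℝ) (hq' : ∀ s : Fin k, (s:ℕ) < (i:ℕ) → y₀ s < q') :
    ∃ y₂ v₂ : Fin k → ℝ, StrictMono y₂ ∧ (∀ s, 0 < v₂ s) ∧
      (∀ s : Fin k, (s:ℕ) < (i:ℕ) → y₂ s = y₀ s ∧ v₂ s = v₀ s) ∧
      y₂ i = q' ∧ F y₂ v₂ = F y₀ v₀ := by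
  classical
  set S : Finset ℝ := Finset.image y₀ (Finset.univ.filter fun s : Fin k => (s:ℕ) < (i:ℕ))
    with hS
  have hQA0 : QA S ≠ 0 := fun h => QA_eval_ne S 0 (by rw [h]; simp)
  set φ : ℝ → ℝ := ratF (PA S) (QA S) with hφdef
  have hφcd : ContDiff ℝ (⊤ : ℕ∞) φ := ratF_contDiff _ _ (QA_eval_ne S)
  have hderφ : deriv φ = ratF (Polynomial.derivative (PA S) * QA S
      - PA S * Polynomial.derivative (QA S)) ((QA S) ^ 2) := ratF_deriv _ _ (QA_eval_ne S)
  have hmemS : ∀ s : Fin k, (s:ℕ) < (i:ℕ) → y₀ s ∈ S := by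
    intro s hs
    exact Finset.mem_image.mpr ⟨s, Finset.mem_filter.mpr ⟨Finset.mem_univ s, hs⟩, rfl⟩
  have hφzero : ∀ p ∈ S, φ p = 0 := by
    intro p hp; simp [hφdef, ratF, PA_eval_zero S p hp]
  have hdφzero : ∀ p ∈ S, deriv φ p = 0 := by
    intro p hp
    rw [hderφ]
    simp [ratF, PA_eval_zero S p hp, PA_deriv_zero S p hp]
  have hφpos : ∀ t, t ∉ S → 0 < φ t := by
    intro t ht
    exact div_pos (PA_eval_pos S t ht) (QA_eval_pos S t)
  obtain ⟨K, hK, hKb⟩ := ratF_deriv_bound (PA S) (QA S) (QA_eval_ne S) (PA_lt_QA S) hQA0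
  set ε : ℝ := 1 / (2 * K) with hε
  have hεpos : 0 < ε := by positivity
  set a : ℝ := min (y₀ i) q' with ha
  set b : ℝ := max (y₀ i) q' with hb
  have hab : a ≤ b := min_le_max
  have hSa : ∀ p ∈ S, p < a := by
    intro p hp
    obtain ⟨s, hs, rfl⟩ := Finset.mem_image.mp hp
    have hsi : (s:ℕ) < (i:ℕ) := (Finset.mem_filter.mp hs).2
    have h1 : y₀ s < y₀ i := hy₀ (Fin.lt_def.mpr hsi)
    have h2 : y₀ s < q' := hq' s hsi
    exact lt_min h1 h2
  have hIccS : ∀ t ∈ Set.Icc a b, t ∉ S := by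
    intro t ht hmem
    exact absurd ht.1 (not_le.mpr (hSa t hmem))
  obtain ⟨t₀, ht₀, hmin⟩ := (isCompact_Icc (a := a) (b := b)).exists_isMinOn
    (Set.nonempty_Icc.mpr hab) hφcd.continuous.continuousOn
  set m₀ : ℝ := φ t₀ with hm₀def
  have hm₀pos : 0 < m₀ := hφpos t₀ (hIccS t₀ ht₀)
  have hm₀le : ∀ t ∈ Set.Icc a b, m₀ ≤ φ t := fun t ht => hmin ht
  set η : ℝ := m₀ * ε with hη
  have hηpos : 0 < η := by positivity
  -- main induction
  have main : ∀ n : ℕ, ∀ y v : Fin k → ℝ, StrictMono y → (∀ s, 0 < v s) →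
      (∀ s : Fin k, (s:ℕ) < (i:ℕ) → y s = y₀ s) → y i ∈ Set.Icc a b →
      |q' - y i| ≤ n * η →
      ∃ y₂ v₂ : Fin k → ℝ, StrictMono y₂ ∧ (∀ s, 0 < v₂ s) ∧
        (∀ s : Fin k, (s:ℕ) < (i:ℕ) → y₂ s = y₀ s ∧ v₂ s = v s) ∧
        y₂ i = q' ∧ F y₂ v₂ = F y v := by
    intro n
    induction n with
    | zero =>
      intro y v hy hv hfix hmem hd
      have : q' - y i = 0 := by
        have := abs_nonneg (q' - y i)
        have h0 : |q' - y i| ≤ 0 := by simpa using hd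
        have := le_antisymm h0 this
        exact abs_eq_zero.mp this
      refine ⟨y, v, hy, hv, fun s hs => ⟨hfix s hs, rfl⟩, by linarith, rfl⟩
    | succ n ih =>
      intro y v hy hv hfix hmem hd
      set d : ℝ := q' - y i with hdd
      have hφyi : m₀ ≤ φ (y i) := hm₀le _ hmem
      have hφyipos : 0 < φ (y i) := lt_of_lt_of_le hm₀pos hφyi
      -- generic step facts
      have stepfacts : ∀ γ : ℝ, |γ| ≤ ε →
          F (fun s => y s + γ * φ (y s)) (fun s => v s / (1 + γ * deriv φ (y s))) = F y v ∧
          StrictMono (fun s => y s + γ * φ (y s)) ∧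
          (∀ s, 0 < v s / (1 + γ * deriv φ (y s))) ∧
          (∀ s : Fin k, (s:ℕ) < (i:ℕ) → y s + γ * φ (y s) = y₀ s ∧
            v s / (1 + γ * deriv φ (y s)) = v s) := by
        intro γ hγ
        obtain ⟨h1, h2, h3⟩ := hstep k F hinv φ hφcd K γ hK hKb hγ y v hy hv
        refine ⟨h1, h2, h3, ?_⟩
        intro s hs
        have hyS : y s ∈ S := by rw [hfix s hs]; exact hmemS s hs
        constructor
        · rw [hφzero _ hyS, hfix s hs]; ring
        · rw [hdφzero _ hyS]; simp
      by_cases hcase : |d| ≤ η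
      · -- final step
        set γ : ℝ := d / φ (y i) with hγdef
        have hγ : |γ| ≤ ε := by
          rw [hγdef, abs_div, abs_of_pos hφyipos]
          calc |d| / φ (y i) ≤ η / m₀ := by
                apply div_le_div₀ hηpos.le hcase hm₀pos hφyi
          _ = ε := by rw [hη]; field_simp
        obtain ⟨h1, h2, h3, h4⟩ := stepfacts γ hγ
        refine ⟨_, _, h2, h3, fun s hs => h4 s hs, ?_, h1⟩
        show y i + γ * φ (y i) = q'
        rw [hγdef, div_mul_cancel₀ _ (ne_of_gt hφyipos)]
        rw [hdd]; ring
      · -- intermediate step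
        push_neg at hcase
        set sgn : ℝ := if 0 ≤ d then 1 else -1 with hsgn
        set γ : ℝ := (η * sgn) / φ (y i) with hγdef
        have habs_sgn : |η * sgn| = η := by
          rw [hsgn]
          rcases le_or_gt 0 d with h | h
          · rw [if_pos h]; simp [abs_of_pos hηpos]
          · rw [if_neg (not_le.mpr h)]; simp [abs_of_pos hηpos]
        have hγ : |γ| ≤ ε := by
          rw [hγdef, abs_div, abs_of_pos hφyipos, habs_sgn]
          calc η / φ (y i) ≤ η / m₀ := by
                apply div_le_div_of_nonneg_left hηpos.le hm₀pos hφyi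
          _ = ε := by rw [hη]; field_simp
        obtain ⟨h1, h2, h3, h4⟩ := stepfacts γ hγ
        set y' : Fin k → ℝ := fun s => y s + γ * φ (y s) with hy'
        set v' : Fin k → ℝ := fun s => v s / (1 + γ * deriv φ (y s)) with hv'
        have hy'i : y' i = y i + η * sgn := by
          rw [hy']
          show y i + γ * φ (y i) = y i + η * sgn
          rw [hγdef, div_mul_cancel₀ _ (ne_of_gt hφyipos)]
        have hfix' : ∀ s : Fin k, (s:ℕ) < (i:ℕ) → y' s = y₀ s := fun s hs => (h4 s hs).1
        have hmem' : y' i ∈ Set.Icc a b := by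
          rw [hy'i, hsgn]
          rcases le_or_gt 0 d with h | h
          · rw [if_pos h]
            have hd2 : η < d := by
              rw [abs_of_nonneg h] at hcase; exact hcase
            constructor
            · have := hmem.1; linarith
            · have hqb : q' ≤ b := le_max_right _ _
              rw [hdd] at hd2; linarith
          · rw [if_neg (not_le.mpr h)]
            have hd2 : η < -d := by
              rw [abs_of_neg h] at hcase; exact hcase
            constructor
            · have hqa : a ≤ q' := min_le_right _ _
              rw [hdd] at hd2; linarith
            · have := hmem.2; linarith
        have hdist' : |q' - y' i| ≤ n * η := by
          rw [hy'i, hsgn]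
          rcases le_or_gt 0 d with h | h
          · rw [if_pos h]
            have hd2 : η < d := by rw [abs_of_nonneg h] at hcase; exact hcase
            have : q' - (y i + η * 1) = d - η := by rw [hdd]; ring
            rw [this, abs_of_nonneg (by linarith)]
            have : |d| ≤ (n+1) * η := by push_cast at hd ⊢; linarith [hd]
            rw [abs_of_nonneg h] at this
            linarith
          · rw [if_neg (not_le.mpr h)]
            have hd2 : η < -d := by rw [abs_of_neg h] at hcase; exact hcase
            have : q' - (y i + η * (-1)) = d + η := by rw [hdd]; ring
            rw [this, abs_of_nonpos (by linarith)]
            have : |d| ≤ (n+1) * η := by push_cast at hd ⊢; linarith [hd]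
            rw [abs_of_neg h] at this
            linarith
        obtain ⟨y₂, v₂, hm2, hp2, hfix2, hq2, hF2⟩ := ih y' v' h2 h3 hfix' hmem' hdist'
        refine ⟨y₂, v₂, hm2, hp2, ?_, hq2, by rw [hF2, h1]⟩
        intro s hs
        refine ⟨(hfix2 s hs).1, ?_⟩
        rw [(hfix2 s hs).2]
        exact (h4 s hs).2
  -- conclude
  obtain ⟨n, hn⟩ := exists_nat_ge (|q' - y₀ i| / η)
  have hdist : |q' - y₀ i| ≤ n * η := by
    rw [div_le_iff₀ hηpos] at hn
    linarith
  have hmem : y₀ i ∈ Set.Icc a b := ⟨min_le_left _ _, le_max_left _ _⟩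
  obtain ⟨y₂, v₂, hm2, hp2, hfix2, hq2, hF2⟩ := main n y₀ v₀ hy₀ hv₀ (fun _ _ => rfl) hmem hdist
  exact ⟨y₂, v₂, hm2, hp2, hfix2, hq2, hF2⟩

/-- Any joint invariant of the product action of the pseudo-group
X = f(x), Y = y, U = u/f′(x) on k points with distinct x-coordinates is constant. -/
theorem stmt_6
    (k : ℕ) (hk : 1 ≤ k)
    (F : (Fin k → ℝ) → (Fin k → ℝ) → ℝ)
    (hinv : ∀ f : ℝ → ℝ,
      ContDiff ℝ (⊤ : ℕ∞) f → StrictMono f → Function.Bijective f → (∀ t : ℝ, 0 < deriv f t) →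
      ∀ x u : Fin k → ℝ, StrictMono x → (∀ i, 0 < u i) →
        F (fun i => f (x i)) (fun i => u i / deriv f (x i)) = F x u) :
    ∀ x u x' u' : Fin k → ℝ, StrictMono x → (∀ i, 0 < u i) →
      StrictMono x' → (∀ i, 0 < u' i) → F x u = F x' u' := by
  intro x u x' u' hx hu hx' hu'
  have main : ∀ i : ℕ, i ≤ k → ∃ y v : Fin k → ℝ, StrictMono y ∧ (∀ s, 0 < v s) ∧
      (∀ s : Fin k, (s:ℕ) < i → y s = x' s ∧ v s = u' s) ∧ F y v = F x u := by
    intro i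
    induction i with
    | zero =>
      intro _
      exact ⟨x, u, hx, hu, fun s hs => absurd hs (by omega), rfl⟩
    | succ i ih =>
      intro hik
      obtain ⟨y, v, hy, hv, hfix, hF⟩ := ih (by omega)
      set I : Fin k := ⟨i, by omega⟩ with hI
      have hq' : ∀ s : Fin k, (s:ℕ) < (I:ℕ) → y s < x' I := by
        intro s hs
        rw [(hfix s hs).1]
        exact hx' (Fin.lt_def.mpr hs)
      obtain ⟨y₂, v₂, hy₂, hv₂, hfix₂, hq₂, hF₂⟩ :=
        Amove k F hinv I y v hy hv (x' I) hq'
      obtain ⟨v₃, hv₃eq, hv₃I, hv₃pos, hF₃⟩ :=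
        Bmove k F hinv y₂ v₂ hy₂ hv₂ I (u' I) (hu' I)
      refine ⟨y₂, v₃, hy₂, hv₃pos, ?_, by rw [hF₃, hF₂, hF]⟩
      intro s hs
      by_cases hsi : (s:ℕ) < i
      · have h1 := hfix₂ s hsi
        have h2 := hfix s hsi
        have hsI : s ≠ I := by
          intro h
          rw [h] at hsi
          simp [hI] at hsi
        exact ⟨h1.1.trans h2.1, (hv₃eq s hsI).trans (h1.2.trans h2.2)⟩
      · have hsval : (s:ℕ) = i := by omega
        have hsI : s = I := Fin.ext (by rw [hsval])
        rw [hsI]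
        exact ⟨hq₂, hv₃I⟩
  obtain ⟨y, v, _, _, hfix, hF⟩ := main k le_rfl
  have hyy : y = x' := funext fun s => (hfix s s.isLt).1
  have hvv : v = u' := funext fun s => (hfix s s.isLt).2
  rw [← hF, hyy, hvv]
end

section
/- Let x : ℤ → ℝ and y : ℤ → ℝ satisfy Δx_m = x_{m+1} − x_m ≠ 0 and δy_n = y_{n+1} − y_n ≠ 0 for all m, n, let u : ℤ × ℤ → ℝ be nowhere zero, and let f, g : ℝ → ℝ satisfy Δf_m := f(x_{m+1}) − f(x_m) ≠ 0 and δg_n := g(y_{n+1}) − g(y_n) ≠ 0 for all m, n. Define the discretized pseudo-group action X_m = f(x_m), Y_n = g(y_n), U_{m,n} = u_{m,n}·(Δx_m/Δf_m)·(δy_n/δg_n). Then for all m, n, the transformed values satisfy (U_{m+1,n+1}·U_{m,n} − U_{m+1,n}·U_{m,n+1})/(U_{m,n}·U_{m+1,n}·U_{m,n+1}·(X_{m+1} − X_m)·(Y_{n+1} − Y_n)) = (u_{m+1,n+1}·u_{m,n} − u_{m+1,n}·u_{m,n+1})/(u_{m,n}·u_{m+1,n}·u_{m,n+1}·Δx_m·δy_n).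 That is, the quantity I₁,₁^d = (u_{m+1,n+1}u_{m,n} − u_{m+1,n}u_{m,n+1})/(u_{m,n}u_{m+1,n}u_{m,n+1}Δx_m δy_n) is a joint invariant of the discretized action, and the invariant numerical scheme I₁,₁^d = 1 on a rectangular mesh is invariant under the full discretized symmetry pseudo-group of the equation (u·u_xy − u_x·u_y)/u³ = 1. -/
lemma key_stmt8 (a b c d p q r s P Q R S : ℝ)
    (ha : a ≠ 0) (hb : b ≠ 0) (hc : c ≠ 0) (hp : p ≠ 0) (hq : q ≠ 0)
    (hr : r ≠ 0) (hs : s ≠ 0) (hP : P ≠ 0) (hQ : Q ≠ 0) (hR : R ≠ 0) (hS : S ≠ 0) :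
    (d * (q / Q) * (s / S) * (a * (p / P) * (r / R))
        - b * (q / Q) * (r / R) * (c * (p / P) * (s / S)))
      / (a * (p / P) * (r / R) * (b * (q / Q) * (r / R)) * (c * (p / P) * (s / S)) * P * R)
    = (d * a - b * c) / (a * b * c * p * r) := by
  field_simp

/-- I₁,₁^d is a joint invariant of the discretized action of the pseudo-group
X = f(x), Y = g(y), U = u/(f′(x)g′(y)) on a rectangular mesh. -/
theorem stmt_8
    (x y : ℤ → ℝ) (u : ℤ → ℤ → ℝ) (f g : ℝ → ℝ)
    (hx : ∀ m : ℤ, x (m + 1) - x m ≠ 0) (hy : ∀ n : ℤ, y (n + 1) - y n ≠ 0)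
    (hu : ∀ m n : ℤ, u m n ≠ 0)
    (hf : ∀ m : ℤ, f (x (m + 1)) - f (x m) ≠ 0)
    (hg : ∀ n : ℤ, g (y (n + 1)) - g (y n) ≠ 0)
    (X Y : ℤ → ℝ) (U : ℤ → ℤ → ℝ)
    (hX : ∀ m, X m = f (x m)) (hY : ∀ n, Y n = g (y n))
    (hU : ∀ m n, U m n = u m n * ((x (m + 1) - x m) / (f (x (m + 1)) - f (x m)))
        * ((y (n + 1) - y n) / (g (y (n + 1)) - g (y n)))) :
    ∀ m n : ℤ,
      (U (m + 1) (n + 1) * U m n - U (m + 1) n * U m (n + 1))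
        / (U m n * U (m + 1) n * U m (n + 1) * (X (m + 1) - X m) * (Y (n + 1) - Y n))
      = (u (m + 1) (n + 1) * u m n - u (m + 1) n * u m (n + 1))
        / (u m n * u (m + 1) n * u m (n + 1) * (x (m + 1) - x m) * (y (n + 1) - y n)) := by
  intro m n
  simp only [hU, hX, hY]
  exact key_stmt8 (u m n) (u (m + 1) n) (u m (n + 1)) (u (m + 1) (n + 1))
    (x (m + 1) - x m) (x (m + 1 + 1) - x (m + 1)) (y (n + 1) - y n) (y (n + 1 + 1) - y (n + 1))
    (f (x (m + 1)) - f (x m)) (f (x (m + 1 + 1)) - f (x (m + 1)))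
    (g (y (n + 1)) - g (y n)) (g (y (n + 1 + 1)) - g (y (n + 1)))
    (hu m n) (hu (m + 1) n) (hu m (n + 1)) (hx m) (hx (m + 1)) (hy n) (hy (n + 1))
    (hf m) (hf (m + 1)) (hg n) (hg (n + 1))
end

section
/- Let x : ℤ → ℝ and y : ℤ → ℝ satisfy Δx_m = x_{m+1} − x_m ≠ 0 and δy_n = y_{n+1} − y_n ≠ 0 for all m, n, let u : ℤ × ℤ → ℝ be nowhere zero, and let f : ℝ → ℝ satisfy Δf_m := f(x_{m+1}) − f(x_m) ≠ 0 for all m. Define the discretized pseudo-group action X_m = f(x_m), Y_n = y_n, U_{m,n} = u_{m,n}·Δx_m/Δf_m. Then for all m, n: (U_{m+1,n+1}·U_{m,n} − U_{m+1,n}·U_{m,n+1})/(U_{m,n}²·U_{m+1,n}·(X_{m+1} − X_m)·δy_n) = (u_{m+1,n+1}·u_{m,n} − u_{m+1,n}·u_{m,n+1})/(u_{m,n}²·u_{m+1,n}·Δx_m·δy_n). That is, I₁,₁^d = (u_{m+1,n+1}u_{m,n} − u_{m+1,n}u_{m,n+1})/(u_{m,n}²u_{m+1,n}Δx_m δy_n)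 is a joint invariant of the discretized action of the pseudo-group X = f(x), Y = y, U = u/f′(x). -/
lemma aux9 (a b c d Dx Dx' Df Df' dy : ℝ)
    (ha : a ≠ 0) (hb : b ≠ 0) (hDx : Dx ≠ 0) (hDx' : Dx' ≠ 0)
    (hDf : Df ≠ 0) (hDf' : Df' ≠ 0) (hdy : dy ≠ 0) :
    ((d * Dx' / Df') * (a * Dx / Df) - (b * Dx' / Df') * (c * Dx / Df))
      / ((a * Dx / Df) ^ 2 * (b * Dx' / Df') * Df * dy)
    = (d * a - b * c) / (a ^ 2 * b * Dx * dy) := by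
  field_simp

/-- I₁,₁^d = (u_{m+1,n+1}u_{m,n} − u_{m+1,n}u_{m,n+1})/(u_{m,n}²u_{m+1,n}Δx_m δy_n)
is a joint invariant of the discretized action of X = f(x), Y = y, U = u/f′(x). -/
theorem stmt_9
    (x y : ℤ → ℝ) (u : ℤ → ℤ → ℝ) (f : ℝ → ℝ)
    (hx : ∀ m : ℤ, x (m + 1) - x m ≠ 0) (hy : ∀ n : ℤ, y (n + 1) - y n ≠ 0)
    (hu : ∀ m n : ℤ, u m n ≠ 0)
    (hf : ∀ m : ℤ, f (x (m + 1)) - f (x m) ≠ 0)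
    (X Y : ℤ → ℝ) (U : ℤ → ℤ → ℝ)
    (hX : ∀ m, X m = f (x m)) (hY : ∀ n, Y n = y n)
    (hU : ∀ m n, U m n = u m n * (x (m + 1) - x m) / (f (x (m + 1)) - f (x m))) :
    ∀ m n : ℤ,
      (U (m + 1) (n + 1) * U m n - U (m + 1) n * U m (n + 1))
        / ((U m n) ^ 2 * U (m + 1) n * (X (m + 1) - X m) * (y (n + 1) - y n))
      = (u (m + 1) (n + 1) * u m n - u (m + 1) n * u m (n + 1))
        / ((u m n) ^ 2 * u (m + 1) n * (x (m + 1) - x m) * (y (n + 1) - y n)) := by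
  intro m n
  rw [hU, hU, hU, hU, hX, hX]
  exact aux9 (u m n) (u (m+1) n) (u m (n+1)) (u (m+1) (n+1))
    (x (m+1) - x m) (x (m+1+1) - x (m+1)) (f (x (m+1)) - f (x m)) (f (x (m+1+1)) - f (x (m+1)))
    (y (n+1) - y n) (hu m n) (hu (m+1) n) (hx m) (hx (m+1)) (hf m) (hf (m+1)) (hy n)
end

section
/- The naive discretization of the invariant (u·u_xy − u_x·u_y)/u³ is not invariant under the discretized pseudo-group. Precisely: there exist sequences x, y : ℤ → ℝ with Δx_m ≠ 0 and δy_n ≠ 0, a nowhere-zero u : ℤ × ℤ → ℝ, C^∞ strictly increasing bijections f, g : ℝ → ℝ with positive derivative, and indices m, n, such that, setting X_m = f(x_m), Y_n = g(y_n), U_{m,n} = u_{m,n}·(Δx_m/(f(x_{m+1}) − f(x_m)))·(δy_n/(g(y_{n+1}) − g(y_n))), one has (U_{m+1,n+1}·U_{m,n} − U_{m+1,n}·U_{m,n+1})/(U_{m,n}³·(X_{m+1} − X_m)·(Y_{n+1} − Y_n)) ≠ (u_{m+1,n+1}·u_{m,n} − u_{m+1,n}·u_{m,n+1})/(u_{m,n}³·Δx_m·δy_n).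 -/
/-- The naive discretization F = (u_{m+1,n+1}u_{m,n} − u_{m+1,n}u_{m,n+1})/(u_{m,n}³Δx_m δy_n)
of the invariant (u·u_xy − u_x·u_y)/u³ is not invariant under the discretized pseudo-group. -/
theorem stmt_10 :
    ∃ (x y : ℤ → ℝ) (u : ℤ → ℤ → ℝ) (f g : ℝ → ℝ) (X Y : ℤ → ℝ) (U : ℤ → ℤ → ℝ),
      (∀ m : ℤ, x (m + 1) - x m ≠ 0) ∧ (∀ n : ℤ, y (n + 1) - y n ≠ 0) ∧
      (∀ m n : ℤ, u m n ≠ 0) ∧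
      ContDiff ℝ (⊤ : ℕ∞) f ∧ StrictMono f ∧ Function.Bijective f ∧ (∀ t : ℝ, 0 < deriv f t) ∧
      ContDiff ℝ (⊤ : ℕ∞) g ∧ StrictMono g ∧ Function.Bijective g ∧ (∀ t : ℝ, 0 < deriv g t) ∧
      (∀ m, X m = f (x m)) ∧ (∀ n, Y n = g (y n)) ∧
      (∀ m n, U m n = u m n * ((x (m + 1) - x m) / (f (x (m + 1)) - f (x m)))
          * ((y (n + 1) - y n) / (g (y (n + 1)) - g (y n)))) ∧
      ∃ m n : ℤ,
        (U (m + 1) (n + 1) * U m n - U (m + 1) n * U m (n + 1))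
          / ((U m n) ^ 3 * (X (m + 1) - X m) * (Y (n + 1) - Y n))
        ≠ (u (m + 1) (n + 1) * u m n - u (m + 1) n * u m (n + 1))
          / ((u m n) ^ 3 * (x (m + 1) - x m) * (y (n + 1) - y n)) := by
  set f : ℝ → ℝ := fun t => t ^ 3 + 3 * t with hf
  have hder : ∀ t : ℝ, deriv f t = 3 * t ^ 2 + 3 := by
    intro t
    have h : HasDerivAt f (3 * t ^ 2 + 3) t := by
      have h1 : HasDerivAt f (↑3 * t ^ (3 - 1) + 3 * 1) t :=
        (hasDerivAt_pow 3 t).add ((hasDerivAt_id t).const_mul 3)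
      convert h1 using 1
      push_cast; ring
    exact h.deriv
  have hderpos : ∀ t : ℝ, 0 < deriv f t := by
    intro t; rw [hder]; positivity
  have hcd : ContDiff ℝ (⊤ : ℕ∞) f := by fun_prop
  have hmono : StrictMono f := by
    apply strictMono_of_deriv_pos hderpos
  have hc : Continuous f := hcd.continuous
  have hsurj : Function.Surjective f := by
    intro b
    have h1 : f (-|b|) ≤ b := by
      simp only [hf]
      nlinarith [pow_nonneg (abs_nonneg b) 3, neg_abs_le b, abs_nonneg b]
    have h2 : b ≤ f |b| := by
      simp only [hf]
      nlinarith [pow_nonneg (abs_nonneg b) 3, le_abs_self b, abs_nonneg b]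
    have hab : -|b| ≤ |b| := by linarith [abs_nonneg b]
    obtain ⟨t, _, ht⟩ := intermediate_value_Icc hab hc.continuousOn ⟨h1, h2⟩
    exact ⟨t, ht⟩
  refine ⟨(fun m => (m : ℝ)), (fun n => (n : ℝ)), (fun m n => (2 : ℝ) ^ (m * n)), f, id,
    (fun m => f (m : ℝ)), (fun n => (n : ℝ)),
    (fun m n => (2 : ℝ) ^ (m * n) * ((((m + 1 : ℤ) : ℝ) - (m : ℝ)) / (f ((m + 1 : ℤ) : ℝ) - f (m : ℝ)))
      * ((((n + 1 : ℤ) : ℝ) - (n : ℝ)) / (id (((n + 1 : ℤ) : ℝ)) - id ((n : ℝ))))),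
    ?_, ?_, ?_, hcd, hmono, ⟨hmono.injective, hsurj⟩, hderpos,
    contDiff_id, strictMono_id, Function.bijective_id, ?_,
    (fun _ => rfl), (fun _ => rfl), (fun _ _ => rfl), 0, 0, ?_⟩
  · intro m; push_cast; norm_num
  · intro n; push_cast; norm_num
  · intro m n; exact zpow_ne_zero _ two_ne_zero
  · intro t; simp
  · simp only [hf]
    norm_num
end

section
/- Let x : ℤ → ℝ satisfy Δx_m = x_{m+1} − x_m ≠ 0 for all m, let y, u : ℤ × ℤ → ℝ, and let f, g, f̃, g̃ : ℝ → ℝ satisfy Δf_m := f(x_{m+1}) − f(x_m) ≠ 0 and f̃(f(x_{m+1})) ≠ f̃(f(x_m)) for all m. Define the first transformation X_m = f(x_m), Y_{m,n} = y_{m,n}·Δf_m/Δx_m + g(x_m), U_{m,n} = u_{m,n} + (Y_{m+1,n} − Y_{m,n})/(X_{m+1} − X_m) − (y_{m+1,n} − y_{m,n})/Δx_m, and then the second transformation X̃_m = f̃(X_m), Ỹ_{m,n} = Y_{m,n}·(X̃_{m+1} − X̃_m)/(X_{m+1} − X_m) + g̃(X_m), Ũ_{m,n} = U_{m,n} + (Ỹ_{m+1,n}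 − Ỹ_{m,n})/(X̃_{m+1} − X̃_m) − (Y_{m+1,n} − Y_{m,n})/(X_{m+1} − X_m). Then for all m, n: (i) X̃_m = (f̃∘f)(x_m); (ii) Ỹ_{m,n} = y_{m,n}·((f̃∘f)(x_{m+1}) − (f̃∘f)(x_m))/Δx_m + G_m, where G_m = ((X̃_{m+1} − X̃_m)/Δf_m)·g(x_m) + g̃(f(x_m)); (iii) Ũ_{m,n} = u_{m,n} + (Ỹ_{m+1,n} − Ỹ_{m,n})/((f̃∘f)(x_{m+1}) − (f̃∘f)(x_m)) − (y_{m+1,n} − y_{m,n})/Δx_m. Hence the discretization of the pseudo-group X = f(x), Y = y f′(x) + g(x), U = u + (y f″(x) + g′(x))/f′(x) is closed under composition. -/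
/-- The discretization of the Vessiot pseudo-group X = f(x), Y = y f′(x) + g(x),
U = u + (y f″(x) + g′(x))/f′(x) is closed under composition. -/
theorem stmt_11
    (x : ℤ → ℝ) (y u : ℤ → ℤ → ℝ) (f g ftil gtil : ℝ → ℝ)
    (hx : ∀ m : ℤ, x (m + 1) - x m ≠ 0)
    (hf : ∀ m : ℤ, f (x (m + 1)) - f (x m) ≠ 0)
    (hff : ∀ m : ℤ, ftil (f (x (m + 1))) ≠ ftil (f (x m)))
    (X : ℤ → ℝ) (Y U : ℤ → ℤ → ℝ) (Xt : ℤ → ℝ) (Yt Ut : ℤ → ℤ → ℝ)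
    (hX : ∀ m, X m = f (x m))
    (hY : ∀ m n, Y m n = y m n * (f (x (m + 1)) - f (x m)) / (x (m + 1) - x m) + g (x m))
    (hU : ∀ m n, U m n = u m n + (Y (m + 1) n - Y m n) / (X (m + 1) - X m)
        - (y (m + 1) n - y m n) / (x (m + 1) - x m))
    (hXt : ∀ m, Xt m = ftil (X m))
    (hYt : ∀ m n, Yt m n = Y m n * (Xt (m + 1) - Xt m) / (X (m + 1) - X m) + gtil (X m))
    (hUt : ∀ m n, Ut m n = U m n + (Yt (m + 1) n - Yt m n) / (Xt (m + 1) - Xt m)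
        - (Y (m + 1) n - Y m n) / (X (m + 1) - X m)) :
    ∀ m n : ℤ,
      Xt m = (ftil ∘ f) (x m) ∧
      Yt m n = y m n * ((ftil ∘ f) (x (m + 1)) - (ftil ∘ f) (x m)) / (x (m + 1) - x m)
        + (((Xt (m + 1) - Xt m) / (f (x (m + 1)) - f (x m))) * g (x m) + gtil (f (x m))) ∧
      Ut m n = u m n + (Yt (m + 1) n - Yt m n) / ((ftil ∘ f) (x (m + 1)) - (ftil ∘ f) (x m))
        - (y (m + 1) n - y m n) / (x (m + 1) - x m) := by
  intro m n
  have hXt' : ∀ m, Xt m = ftil (f (x m)) := fun m => by rw [hXt, hX]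
  refine ⟨hXt' m, ?_, ?_⟩
  · simp only [hYt, hY, hXt, hX, Function.comp_apply]
    have h1 := hx m
    have h2 := hf m
    field_simp
    ring
  · rw [hUt, hU]
    simp only [Function.comp_apply, hXt, hX]
    ring
end

section
/- Let x, y, u : ℝ² → ℝ and fix (s₀, t₀) ∈ ℝ². Assume the partial derivatives x_s, x_t, y_s, y_t, u_s, u_t all exist at (s₀, t₀) and that J = x_s·y_t − y_s·x_t ≠ 0 there. For h ≠ 0 define the forward differences Δa(h) = a(s₀ + h, t₀) − a(s₀, t₀) and δa(h) = a(s₀, t₀ + h) − a(s₀, t₀), and set Q(h) = (δy(h)·Δu(h) − Δy(h)·δu(h))/(Δx(h)·δy(h) − Δy(h)·δx(h)). Then Q(h) tends to (y_t·u_s − y_s·u_t)/(x_s·y_t − y_s·x_t) as h → 0. That is, the finite difference approximation u_x^{m,n} of the derivative u_x is consistent: in the continuous limit it converges to the implicit total derivative expression for u_x. -/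
/-!
Dividing all six forward differences by the step `h` leaves the quotient unchanged. The
rescaled differences are difference quotients, which converge to the partial derivatives,
and the limiting denominator is the Jacobian, which is nonzero; so the quotient converges
by continuity of division away from zero.
-/

open Filter Topology

theorem tendsto_cramer_ratio_of_tendsto_div {α : Type*} {l : Filter α} {k : α → ℝ}
    (hk : ∀ᶠ h in l, k h ≠ 0) {Δx Δy Δu δx δy δu : α → ℝ} {xs ys us xt yt ut : ℝ}
    (hΔx : Tendsto (fun h => Δx h / k h) l (𝓝 xs))
    (hΔy : Tendsto (fun h => Δy h / k h) l (𝓝 ys))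
    (hΔu : Tendsto (fun h => Δu h / k h) l (𝓝 us))
    (hδx : Tendsto (fun h => δx h / k h) l (𝓝 xt))
    (hδy : Tendsto (fun h => δy h / k h) l (𝓝 yt))
    (hδu : Tendsto (fun h => δu h / k h) l (𝓝 ut))
    (hJ : xs * yt - ys * xt ≠ 0) :
    Tendsto (fun h => (δy h * Δu h - Δy h * δu h) / (Δx h * δy h - Δy h * δx h)) l
      (𝓝 ((yt * us - ys * ut) / (xs * yt - ys * xt))) := by
  have hnum := (hδy.mul hΔu).sub (hΔy.mul hδu)
  have hden := (hΔx.mul hδy).sub (hΔy.mul hδx)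
  refine (hnum.div hden hJ).congr' ?_
  filter_upwards [hk] with h hh
  rw [Pi.div_apply]
  field_simp

theorem HasDerivAt.tendsto_forward_diff_div {f : ℝ → ℝ} {f' a : ℝ} (hf : HasDerivAt f f' a) :
    Tendsto (fun h => (f (a + h) - f a) / h) (𝓝[≠] 0) (𝓝 f') := by
  simpa only [smul_eq_mul, div_eq_inv_mul] using hf.tendsto_slope_zero

/-- Consistency of the finite difference approximation u_x^{m,n}: as the step
h → 0 the difference quotient converges to (y_t u_s − y_s u_t)/(x_s y_t − y_s x_t). -/
theorem stmt_16
    (x y u : ℝ → ℝ → ℝ) (s0 t0 : ℝ)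
    (xs xt ys yt us ut : ℝ)
    (hxs : HasDerivAt (fun s => x s t0) xs s0)
    (hxt : HasDerivAt (fun t => x s0 t) xt t0)
    (hys : HasDerivAt (fun s => y s t0) ys s0)
    (hyt : HasDerivAt (fun t => y s0 t) yt t0)
    (hus : HasDerivAt (fun s => u s t0) us s0)
    (hut : HasDerivAt (fun t => u s0 t) ut t0)
    (hJ : xs * yt - ys * xt ≠ 0) :
    Filter.Tendsto
      (fun h : ℝ =>
        ((y s0 (t0 + h) - y s0 t0) * (u (s0 + h) t0 - u s0 t0)
          - (y (s0 + h) t0 - y s0 t0) * (u s0 (t0 + h) - u s0 t0))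
        / ((x (s0 + h) t0 - x s0 t0) * (y s0 (t0 + h) - y s0 t0)
          - (y (s0 + h) t0 - y s0 t0) * (x s0 (t0 + h) - x s0 t0)))
      (nhdsWithin (0 : ℝ) {(0 : ℝ)}ᶜ)
      (nhds ((yt * us - ys * ut) / (xs * yt - ys * xt))) :=
  tendsto_cramer_ratio_of_tendsto_div (k := id) self_mem_nhdsWithin
    hxs.tendsto_forward_diff_div hys.tendsto_forward_diff_div hus.tendsto_forward_diff_div
    hxt.tendsto_forward_diff_div hyt.tendsto_forward_diff_div hut.tendsto_forward_diff_div hJ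
end
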